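/- Let α be a type with decidable equality and let C be the default alignment cost function. For all lists A B : List α and every list l that is a subsequence (List.Sublist) of both A and B, one has levenshtein C A B + 2 * l.length ≤ A.length + B.length. (Thus any common subsequence bounds the edit distance from above via |A| + |B| − 2·|l|.) -/

import Mathlib

/-! Mathlib's `Mathlib.Data.List.EditDistance.Defs` is no longer in Mathlib; its definitions
(as of December 2024) are reproduced here verbatim in meaning. -/

/-- A cost function for Levenshtein distance (as in the old Mathlib). -/
structure Levenshtein.Cost (α β δ : Type*) where
  /-- Cost to delete an element from a list. -/
  delete : α → δ
  /-- Cost to insert an element into a list. -/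
  insert : β → δ
  /-- Cost to substitute one element for another in a list. -/
  substitute : α → β → δ

section LevenshteinDefs

variable {α β δ : Type*} [AddZeroClass δ] [Min δ]

namespace Levenshtein

variable (C : Levenshtein.Cost α β δ)

/-- (Old Mathlib) Implementation detail of `suffixLevenshtein`. -/
def impl
    (xs : List α) (y : β) (d : {r : List δ // 0 < r.length}) : {r : List δ // 0 < r.length} :=
  let ⟨ds, w⟩ := d
  xs.zip (ds.zip ds.tail) |>.foldr
    (init := ⟨[C.insert y + ds.getLast (List.length_pos_iff.mp w)], by simp⟩)
    (fun ⟨x, d₀, d₁⟩ ⟨r, w⟩ =>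
      ⟨min (C.delete x + r[0]) (min (C.insert y + d₀) (C.substitute x y + d₁)) :: r, by simp⟩)

end Levenshtein

open Levenshtein

variable (C : Levenshtein.Cost α β δ)

/-- (Old Mathlib) `suffixLevenshtein C xs ys` computes the Levenshtein distance
(using the cost functions provided by `C`) from each suffix of `xs` to `ys`. -/
def suffixLevenshtein (xs : List α) (ys : List β) : {r : List δ // 0 < r.length} :=
  ys.foldr
    (impl C xs)
    (xs.foldr (init := ⟨[0], by simp⟩)
      (fun a ⟨r, w⟩ => ⟨(C.delete a + r[0]) :: r, by simp⟩))

/-- (Old Mathlib) `levenshtein C xs ys` computes the Levenshtein distance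
(using the cost functions provided by `C`) from `xs` to `ys`. -/
def levenshtein (xs : List α) (ys : List β) : δ :=
  let ⟨r, _⟩ := suffixLevenshtein C xs ys
  r[0]

end LevenshteinDefs

/-- The default alignment cost function: deletion and insertion cost 1,
substitution costs 0 for equal words and 2 for distinct words. -/
def alignCost {α : Type*} [DecidableEq α] : Levenshtein.Cost α α ℕ where
  delete _ := 1
  insert _ := 1
  substitute a b := if a = b then 0 else 2

section LevenshteinPort

variable {α β δ : Type*} [AddZeroClass δ] [Min δ]
variable (C : Levenshtein.Cost α β δ)

theorem Levenshtein.impl_cons_port {x : α} {xs : List α} {y : β} {d : δ} {ds : List δ} {w}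
    (w' : 0 < List.length ds) :
    Levenshtein.impl C (x :: xs) y ⟨d :: ds, w⟩ =
      let ⟨r, w⟩ := Levenshtein.impl C xs y ⟨ds, w'⟩
      ⟨min (C.delete x + r[0]) (min (C.insert y + d) (C.substitute x y + ds[0])) :: r, by simp⟩ :=
  match ds, w' with | _ :: _, _ => rfl

theorem Levenshtein.impl_cons_fst_zero_port {x : α} {xs : List α} {y : β} {d : δ} {ds : List δ}
    {w} (h) (w' : 0 < List.length ds) :
    (Levenshtein.impl C (x :: xs) y ⟨d :: ds, w⟩).1[0]'h =
      let ⟨r, w⟩ := Levenshtein.impl C xs y ⟨ds, w'⟩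
      min (C.delete x + r[0]) (min (C.insert y + d) (C.substitute x y + ds[0])) :=
  match ds, w' with | _ :: _, _ => rfl

theorem Levenshtein.impl_length_port {xs : List α} {y : β} (d : {r : List δ // 0 < r.length})
    (w : d.1.length = xs.length + 1) :
    (Levenshtein.impl C xs y d).1.length = xs.length + 1 := by
  induction xs generalizing d with
  | nil => rfl
  | cons x xs ih =>
    dsimp [Levenshtein.impl]
    match d, w with
    | ⟨d₁ :: d₂ :: ds, _⟩, w =>
      dsimp
      congr 1
      exact ih ⟨d₂ :: ds, (by simp)⟩ (by simpa using w)

theorem suffixLevenshtein_length_port (xs : List α) (ys : List β) :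
    (suffixLevenshtein C xs ys).1.length = xs.length + 1 := by
  induction ys with
  | nil =>
    dsimp [suffixLevenshtein]
    induction xs with
    | nil => rfl
    | cons _ xs ih =>
      simp_all
  | cons y ys ih =>
    dsimp [suffixLevenshtein]
    rw [Levenshtein.impl_length_port]
    exact ih

theorem suffixLevenshtein_cons₂_port (xs : List α) (y ys) :
    suffixLevenshtein C xs (y :: ys) = (Levenshtein.impl C xs) y (suffixLevenshtein C xs ys) :=
  rfl

theorem suffixLevenshtein_cons₁_aux_port {α} {x y : { l : List α // 0 < l.length }}
    (w₀ : x.1[0]'x.2 = y.1[0]'y.2) (w : x.1.tail = y.1.tail) : x = y := by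
  match x, y with
  | ⟨hx :: tx, _⟩, ⟨hy :: ty, _⟩ => simp_all

theorem suffixLevenshtein_cons₁_port (x : α) (xs ys) :
    suffixLevenshtein C (x :: xs) ys =
      ⟨levenshtein C (x :: xs) ys ::
        (suffixLevenshtein C xs ys).1, by simp⟩ := by
  induction ys with
  | nil =>
    dsimp [levenshtein, suffixLevenshtein]
    rfl
  | cons y ys ih =>
    apply suffixLevenshtein_cons₁_aux_port
    · rfl
    · rw [suffixLevenshtein_cons₂_port (xs := x :: xs), ih, Levenshtein.impl_cons_port]
      · rfl
      · simp [suffixLevenshtein_length_port]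

theorem suffixLevenshtein_cons_cons_fst_get_zero_port (x : α) (xs y ys) (w) :
    (suffixLevenshtein C (x :: xs) (y :: ys)).1[0]'w =
      let ⟨dx, _⟩ := suffixLevenshtein C xs (y :: ys)
      let ⟨dy, _⟩ := suffixLevenshtein C (x :: xs) ys
      let ⟨dxy, _⟩ := suffixLevenshtein C xs ys
      min
        (C.delete x + dx[0])
        (min
          (C.insert y + dy[0])
          (C.substitute x y + dxy[0])) := by
  conv =>
    lhs
    dsimp only [suffixLevenshtein_cons₂_port]
  simp only [suffixLevenshtein_cons₁_port]
  rw [Levenshtein.impl_cons_fst_zero_port]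
  rfl

theorem getLast_eq_zero_port {ε : Type*} (r : List ε) (h : r.length = 1) (hp : r ≠ []) :
    r.getLast hp = r[0]'(by omega) := by
  match r, h with | [a], _ => rfl

theorem levenshtein_nil_cons (y) (ys) :
    levenshtein C [] (y :: ys) = C.insert y + levenshtein C [] ys := by
  exact congrArg (C.insert y + ·)
    (getLast_eq_zero_port _ (suffixLevenshtein_length_port C [] ys) _)

@[simp] theorem levenshtein_nil_nil_port : levenshtein C [] [] = 0 := rfl

theorem levenshtein_cons_nil (x : α) (xs : List α) :
    levenshtein C (x :: xs) [] = C.delete x + levenshtein C xs [] :=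
  rfl

theorem levenshtein_cons_cons (x : α) (xs : List α) (y : β) (ys : List β) :
    levenshtein C (x :: xs) (y :: ys) =
      min (C.delete x + levenshtein C xs (y :: ys))
        (min (C.insert y + levenshtein C (x :: xs) ys)
          (C.substitute x y + levenshtein C xs ys)) :=
  suffixLevenshtein_cons_cons_fst_get_zero_port ..

end LevenshteinPort

theorem levenshtein_add_two_mul_common_sublist_length_le
    {α : Type*} [DecidableEq α] (A B : List α) (l : List α)
    (hA : l.Sublist A) (hB : l.Sublist B) :
    levenshtein alignCost A B + 2 * l.length ≤ A.length + B.length := by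
  have hdel : ∀ a : α, (alignCost : Levenshtein.Cost α α ℕ).delete a = 1 := fun _ => rfl
  have hins : ∀ a : α, (alignCost : Levenshtein.Cost α α ℕ).insert a = 1 := fun _ => rfl
  have hsub : ∀ a : α, (alignCost : Levenshtein.Cost α α ℕ).substitute a a = 0 := by
    intro a; simp [alignCost]
  induction A generalizing B l with
  | nil =>
    obtain rfl := List.sublist_nil.mp hA
    simp only [List.length_nil, Nat.mul_zero, Nat.add_zero, Nat.zero_add]
    clear hB
    induction B with
    | nil => simp
    | cons b B ih =>
      rw [levenshtein_nil_cons, hins]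
      have h2 := ih
      simp only [List.length_cons]
      omega
  | cons a A' ihA =>
    induction B generalizing l with
    | nil =>
      obtain rfl := List.sublist_nil.mp hB
      have := ihA [] [] (List.nil_sublist _) (List.nil_sublist _)
      rw [levenshtein_cons_nil, hdel]
      simp only [List.length_nil, Nat.mul_zero, Nat.add_zero, List.length_cons] at this ⊢
      omega
    | cons b B' ihB =>
      cases l with
      | nil =>
        have h := ihA (b :: B') [] (List.nil_sublist _) (List.nil_sublist _)
        have hmin : levenshtein alignCost (a :: A') (b :: B')
            ≤ 1 + levenshtein alignCost A' (b :: B') := by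
          rw [levenshtein_cons_cons, hdel]; exact min_le_left _ _
        simp only [List.length_nil, Nat.mul_zero, Nat.add_zero, List.length_cons] at h ⊢
        omega
      | cons x l' =>
        cases hA with
        | cons _ hA' =>
          have h := ihA (b :: B') (x :: l') hA' hB
          have hmin : levenshtein alignCost (a :: A') (b :: B')
              ≤ 1 + levenshtein alignCost A' (b :: B') := by
            rw [levenshtein_cons_cons, hdel]; exact min_le_left _ _
          simp only [List.length_cons] at h ⊢
          omega
        | cons_cons _ hA' =>
          cases hB with
          | cons _ hB' =>
            have h := ihB (a :: l') (hA'.cons₂ a) hB'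
            have hmin : levenshtein alignCost (a :: A') (b :: B')
                ≤ 1 + levenshtein alignCost (a :: A') B' := by
              rw [levenshtein_cons_cons, hins]
              exact le_trans (min_le_right _ _) (min_le_left _ _)
            simp only [List.length_cons] at h ⊢
            omega
          | cons_cons _ hB' =>
            have h := ihA B' l' hA' hB'
            have hmin : levenshtein alignCost (a :: A') (a :: B')
                ≤ levenshtein alignCost A' B' := by
              rw [levenshtein_cons_cons, hsub]
              exact le_trans (min_le_right _ _) (le_trans (min_le_right _ _) (by omega))
            simp only [List.length_cons]
            omega
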